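/- Let U ∈ C¹([0,h₀]), c ∈ ℝ, φ ∈ C¹([0,h₀]) with φ(0) = 0, and set u₁(x,y) = φ'(y)cos x, v₁(x,y) = φ(y)sin x. Suppose v₂, p₂ : ℝ × [0,h₀] → ℝ are C¹, 2π-periodic in x, and satisfy the second-order vertical momentum equation (U−c)∂ₓv₂ + u₁∂ₓv₁ + v₁∂_y v₁ = −∂_y p₂ in ℝ × (0,h₀). Then for all y ∈ [0,h₀], (1/2π)∫₀^{2π} p₂(x,y) dx = −(1/2)φ(y)² + (1/2π)∫₀^{2π} p₂(x,0) dx. -/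

import Mathlib

/-!
Averaging the vertical momentum equation over a period in `x` removes `(U - c) ∂ₓv₂`, because
`v₂` is periodic, while `u₁ ∂ₓv₁ + v₁ ∂_y v₁ = φ φ'` pointwise since `cos² + sin² = 1`.
Differentiating under the integral sign, the mean of `p₂` at height `y` therefore has derivative
`-φ φ'` on `(0, h₀)`, so the mean of `p₂` plus `φ² / 2` is constant on `[0, h₀]`; evaluate at the
bed, where `φ = 0`.
-/

/-- Partial derivative in the first (horizontal) variable. -/
noncomputable def pdX (f : ℝ → ℝ → ℝ) : ℝ → ℝ → ℝ := fun x y => deriv (fun t => f t y) x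

/-- Partial derivative in the second (vertical) variable. -/
noncomputable def pdY (f : ℝ → ℝ → ℝ) : ℝ → ℝ → ℝ := fun x y => deriv (fun t => f x t) y

open Set Function intervalIntegral Real

section PartialDerivatives

variable {f : ℝ → ℝ → ℝ}

theorem pdX_eq_fderiv_apply (hf : Differentiable ℝ (uncurry f)) (x y : ℝ) :
    pdX f x y = fderiv ℝ (uncurry f) (x, y) (1, 0) := by
  exact ((hf (x, y)).hasFDerivAt.comp_hasDerivAt x
    ((hasDerivAt_id' x).prodMk (hasDerivAt_const x y))).deriv

theorem pdY_eq_fderiv_apply (hf : Differentiable ℝ (uncurry f)) (x y : ℝ) :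
    pdY f x y = fderiv ℝ (uncurry f) (x, y) (0, 1) := by
  exact ((hf (x, y)).hasFDerivAt.comp_hasDerivAt y
    ((hasDerivAt_const y x).prodMk (hasDerivAt_id' y))).deriv

theorem hasDerivAt_pdX (hf : Differentiable ℝ (uncurry f)) (x y : ℝ) :
    HasDerivAt (fun t => f t y) (pdX f x y) x :=
  (hf.differentiableAt.comp x (by fun_prop : DifferentiableAt ℝ (fun t => (t, y)) x)).hasDerivAt

theorem hasDerivAt_pdY (hf : Differentiable ℝ (uncurry f)) (x y : ℝ) :
    HasDerivAt (fun t => f x t) (pdY f x y) y :=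
  (hf.differentiableAt.comp y (by fun_prop : DifferentiableAt ℝ (fun t => (x, t)) y)).hasDerivAt

theorem continuous_pdX (hf : ContDiff ℝ 1 (uncurry f)) : Continuous (uncurry (pdX f)) := by
  have hdiff := hf.differentiable one_ne_zero
  rw [show uncurry (pdX f) = fun p => fderiv ℝ (uncurry f) p (1, 0) from
    funext fun p => pdX_eq_fderiv_apply hdiff p.1 p.2]
  exact (hf.continuous_fderiv one_ne_zero).clm_apply continuous_const

theorem continuous_pdY (hf : ContDiff ℝ 1 (uncurry f)) : Continuous (uncurry (pdY f)) := by
  have hdiff := hf.differentiable one_ne_zero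
  rw [show uncurry (pdY f) = fun p => fderiv ℝ (uncurry f) p (0, 1) from
    funext fun p => pdY_eq_fderiv_apply hdiff p.1 p.2]
  exact (hf.continuous_fderiv one_ne_zero).clm_apply continuous_const

theorem integral_pdX_eq_zero_of_periodic (hf : ContDiff ℝ 1 (uncurry f)) {T : ℝ} (y : ℝ)
    (hper : Periodic (fun x => f x y) T) : ∫ x in 0..T, pdX f x y = 0 := by
  rw [integral_eq_sub_of_hasDerivAt (fun x _ => hasDerivAt_pdX (hf.differentiable one_ne_zero) x y)
    (((continuous_pdX hf).comp (by fun_prop : Continuous fun x : ℝ => (x, y))).intervalIntegrable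
      _ _)]
  simpa [sub_eq_zero] using hper 0

theorem hasDerivAt_integral_of_contDiff (hf : ContDiff ℝ 1 (uncurry f)) (a b y : ℝ) :
    HasDerivAt (fun y => ∫ x in a..b, f x y) (∫ x in a..b, pdY f x y) y := by
  obtain ⟨C, hC⟩ := (isCompact_uIcc.prod (isCompact_closedBall y 1)).exists_bound_of_continuousOn
    (continuous_pdY hf).continuousOn
  have hslice : ∀ {g : ℝ → ℝ → ℝ}, Continuous (uncurry g) → ∀ t, Continuous fun x => g x t :=
    fun hg t => hg.comp (by fun_prop : Continuous fun x : ℝ => (x, t))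
  refine (intervalIntegral.hasDerivAt_integral_of_dominated_loc_of_deriv_le (bound := fun _ => C)
    (Metric.closedBall_mem_nhds y one_pos)
    (Filter.Eventually.of_forall fun t => (hslice hf.continuous t).aestronglyMeasurable)
    ((hslice hf.continuous y).intervalIntegrable _ _)
    (hslice (continuous_pdY hf) y).aestronglyMeasurable
    (MeasureTheory.ae_of_all _ fun x hx t ht => hC (x, t) ⟨uIoc_subset_uIcc hx, ht⟩)
    intervalIntegrable_const
    (MeasureTheory.ae_of_all _ fun x _ t _ => hasDerivAt_pdY (hf.differentiable one_ne_zero) x t)).2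

end PartialDerivatives

theorem eq_of_hasDerivAt_eq_zero_on_Ioo {f : ℝ → ℝ} {a b : ℝ} (hcont : ContinuousOn f (Icc a b))
    (hderiv : ∀ t ∈ Ioo a b, HasDerivAt f 0 t) : ∀ y ∈ Icc a b, f y = f a := by
  rintro y ⟨hay, hyb⟩
  rcases hay.eq_or_lt with rfl | hlt
  · rfl
  obtain ⟨t, -, ht⟩ := exists_hasDerivAt_eq_slope f (fun _ => 0) hlt
    (hcont.mono (Icc_subset_Icc_right hyb)) fun t ht => hderiv t ⟨ht.1, ht.2.trans_le hyb⟩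
  rw [eq_comm, div_eq_zero_iff, sub_eq_zero, sub_eq_zero] at ht
  exact ht.resolve_right hlt.ne'

theorem pdX_mul_sin (φ : ℝ → ℝ) (x y : ℝ) :
    pdX (fun x y => φ y * sin x) x y = φ y * cos x :=
  ((hasDerivAt_sin x).const_mul (φ y)).deriv

theorem pdY_mul_sin {φ : ℝ → ℝ} {y : ℝ} (hφ : DifferentiableAt ℝ φ y) (x : ℝ) :
    pdY (fun x y => φ y * sin x) x y = deriv φ y * sin x :=
  (hφ.hasDerivAt.mul_const (sin x)).deriv

theorem advection_mul_sin_eq {φ : ℝ → ℝ} {y : ℝ} (hφ : DifferentiableAt ℝ φ y) (x : ℝ) :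
    deriv φ y * cos x * pdX (fun x y => φ y * sin x) x y
      + φ y * sin x * pdY (fun x y => φ y * sin x) x y = φ y * deriv φ y := by
  rw [pdX_mul_sin, pdY_mul_sin hφ]
  linear_combination φ y * deriv φ y * cos_sq_add_sin_sq x

theorem integral_pdY_eq_of_momentum {v p : ℝ → ℝ → ℝ} (hv : ContDiff ℝ 1 (uncurry v))
    {T y k m : ℝ} (hper : Periodic (fun x => v x y) T)
    (e : ∀ x, k * pdX v x y + m = -(pdY p x y)) :
    ∫ x in 0..T, pdY p x y = -(T * m) := by
  have hint : IntervalIntegrable (fun x => k * pdX v x y) MeasureTheory.volume 0 T :=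
    (continuous_const.mul ((continuous_pdX hv).comp
      (by fun_prop : Continuous fun x : ℝ => (x, y)))).intervalIntegrable _ _
  calc ∫ x in 0..T, pdY p x y = ∫ x in 0..T, -(k * pdX v x y + m) :=
        integral_congr fun x _ => neg_eq_iff_eq_neg.1 (e x).symm
    _ = -(k * ∫ x in 0..T, pdX v x y) - T * m := by
        rw [integral_neg, integral_add hint intervalIntegrable_const, integral_const_mul,
          integral_const, smul_eq_mul, sub_zero]
        ring
    _ = -(T * m) := by rw [integral_pdX_eq_zero_of_periodic hv y hper]; ring

theorem stmt7_general (h₀ c : ℝ) (U : ℝ → ℝ)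
    (φ : ℝ → ℝ) (hφ : ContDiffOn ℝ 1 φ (Set.Icc 0 h₀)) (hφ0 : φ 0 = 0)
    (u₁ v₁ : ℝ → ℝ → ℝ)
    (hu₁ : u₁ = fun x y => deriv φ y * Real.cos x)
    (hv₁ : v₁ = fun x y => φ y * Real.sin x)
    (v₂ p₂ : ℝ → ℝ → ℝ)
    (hv₂ : ContDiff ℝ 1 (Function.uncurry v₂))
    (hp₂ : ContDiff ℝ 1 (Function.uncurry p₂))
    (hv₂per : ∀ x y : ℝ, v₂ (x + 2 * Real.pi) y = v₂ x y)
    (e₂ : ∀ x : ℝ, ∀ y ∈ Set.Ioo (0 : ℝ) h₀,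
      (U y - c) * pdX v₂ x y + u₁ x y * pdX v₁ x y + v₁ x y * pdY v₁ x y
        = -(pdY p₂ x y)) :
    ∀ y ∈ Set.Icc (0 : ℝ) h₀,
      (1 / (2 * Real.pi)) * ∫ x in (0 : ℝ)..(2 * Real.pi), p₂ x y
        = -(1 / 2) * (φ y) ^ 2
          + (1 / (2 * Real.pi)) * ∫ x in (0 : ℝ)..(2 * Real.pi), p₂ x 0 := by
  subst hu₁ hv₁
  set mean : ℝ → ℝ := fun t => ∫ x in 0..2 * π, p₂ x t
  have hmean (t : ℝ) := hasDerivAt_integral_of_contDiff hp₂ 0 (2 * π) t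
  have hcont : ContinuousOn (fun t => mean t + π * φ t ^ 2) (Icc 0 h₀) :=
    (continuous_iff_continuousAt.2 fun t => (hmean t).continuousAt).continuousOn.add
      (continuousOn_const.mul (hφ.continuousOn.pow 2))
  have hderiv : ∀ t ∈ Ioo 0 h₀, HasDerivAt (fun t => mean t + π * φ t ^ 2) 0 t := by
    intro t ht
    have hφt := (hφ.contDiffAt (Icc_mem_nhds ht.1 ht.2)).differentiableAt one_ne_zero
    have hpdY := integral_pdY_eq_of_momentum (p := p₂) (k := U t - c)
      (m := φ t * deriv φ t) hv₂ (fun x => hv₂per x t)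
      fun x => by rw [← advection_mul_sin_eq hφt x, ← add_assoc]; exact e₂ x t ht
    refine ((hmean t).add ((hφt.hasDerivAt.pow 2).const_mul π)).congr_deriv ?_
    rw [hpdY]
    ring
  intro y hy
  have hy' := eq_of_hasDerivAt_eq_zero_on_Ioo hcont hderiv y hy
  simp only [hφ0] at hy'
  field_simp
  linarith

/-- With first-order fields `u₁ = φ'(y)cos x`, `v₁ = φ(y)sin x`, `φ(0) = 0`,
if `v₂, p₂` are C¹, `2π`-periodic in `x`, and satisfy the second-order vertical momentum
equation, then the `x`-average of `p₂` at depth `y` equals `-(1/2)φ(y)²` plus the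
`x`-average of `p₂` at the bed. -/
theorem stmt7 (h₀ c : ℝ) (hh₀ : 0 < h₀) (U : ℝ → ℝ)
    (hU : ContDiffOn ℝ 1 U (Set.Icc 0 h₀))
    (φ : ℝ → ℝ) (hφ : ContDiffOn ℝ 1 φ (Set.Icc 0 h₀)) (hφ0 : φ 0 = 0)
    (u₁ v₁ : ℝ → ℝ → ℝ)
    (hu₁ : u₁ = fun x y => deriv φ y * Real.cos x)
    (hv₁ : v₁ = fun x y => φ y * Real.sin x)
    (v₂ p₂ : ℝ → ℝ → ℝ)
    (hv₂ : ContDiff ℝ 1 (Function.uncurry v₂))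
    (hp₂ : ContDiff ℝ 1 (Function.uncurry p₂))
    (hv₂per : ∀ x y : ℝ, v₂ (x + 2 * Real.pi) y = v₂ x y)
    (hp₂per : ∀ x y : ℝ, p₂ (x + 2 * Real.pi) y = p₂ x y)
    (e₂ : ∀ x : ℝ, ∀ y ∈ Set.Ioo (0 : ℝ) h₀,
      (U y - c) * pdX v₂ x y + u₁ x y * pdX v₁ x y + v₁ x y * pdY v₁ x y
        = -(pdY p₂ x y)) :
    ∀ y ∈ Set.Icc (0 : ℝ) h₀,
      (1 / (2 * Real.pi)) * ∫ x in (0 : ℝ)..(2 * Real.pi), p₂ x y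
        = -(1 / 2) * (φ y) ^ 2
          + (1 / (2 * Real.pi)) * ∫ x in (0 : ℝ)..(2 * Real.pi), p₂ x 0 :=
  stmt7_general h₀ c U φ hφ hφ0 u₁ v₁ hu₁ hv₁ v₂ p₂ hv₂ hp₂ hv₂per e₂
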